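/- Let M_1 and M_2 be d×d complex matrices. Then the following are equivalent: (1) there exists a d×d unitary matrix V such that Δ(V* M_2* M_1 V) = 0; (2) there exist an integer r ≥ d and a d×r complex matrix W with W W* = I_d such that Δ(W* M_2* M_1 W) = 0; (3) Tr(M_2* M_1) = 0. -/

import Mathlib

/-!
(1) ⇒ (2) ⇒ (3) is trace bookkeeping: `Tr (W* A W) = Tr (A W W*) = Tr A` for `W W* = 1`.
For (3) ⇒ (1) we show that every trace-zero matrix `A` (here `M₂* M₁`) is unitarily similar
to a matrix with zero diagonal. If `x, y` are orthonormal, the values `⟪v, A v⟫` over unit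
vectors `v ∈ span {x, y}` fill the segment from `⟪x, A x⟫` to `⟪y, A y⟫` (take `v` along
`x + z y` for a suitable `z`). Adding one basis vector at a time, the values over unit vectors
then fill the convex hull of the diagonal entries, which contains their mean `Tr A / d = 0`.
A unit vector `v` with `⟪v, A v⟫ = 0`, completed to an orthonormal basis, gives a unitary that
makes one diagonal entry zero; the complementary block still has trace zero, and we induct on
the dimension.
-/

open Matrix

/-- The diagonal truncation map Δ: zeros out off-diagonal entries. -/
def delta {n : Type*} [DecidableEq n] (M : Matrix n n ℂ) : Matrix n n ℂ :=
  Matrix.diagonal (fun i => M i i)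

open ComplexConjugate Submodule
open scoped InnerProductSpace

lemma Complex.exists_norm_eq_one_mul_add_conj_mul_eq_real_mul (δ b c : ℂ) (hδ : δ ≠ 0) :
    ∃ u : ℂ, ‖u‖ = 1 ∧ ∃ μ : ℝ, u * b + conj u * c = μ * δ := by
  -- `conj δ * (u * b + conj u * c)` is real exactly when `u * (conj δ * b - δ * conj c)` is.
  obtain ⟨u, hu, hum⟩ := exists_norm_eq_mul_self (conj δ * b - δ * conj c)
  refine ⟨u, hu, (conj δ * (u * b + conj u * c)).re / normSq δ, ?_⟩
  have hreal : ((conj δ * (u * b + conj u * c)).re : ℂ) = conj δ * (u * b + conj u * c) := by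
    refine conj_eq_iff_re.mp ?_
    have hum' := congrArg conj hum
    simp only [conj_ofReal, map_mul, map_add, map_sub, conj_conj] at hum' ⊢
    linear_combination hum - hum'
  rw [ofReal_div, hreal, normSq_eq_conj_mul_self]
  field_simp [(map_ne_zero conj).mpr hδ]

/-- For `δ = ⟪x, T x⟫ - ⟪y, T y⟫`, `b = ⟪x, T y⟫`, `c = ⟪y, T x⟫` this is the condition for the
unit vector along `x + z • y` to satisfy `⟪v, T v⟫ = t ⟪x, T x⟫ + (1 - t) ⟪y, T y⟫`. -/
lemma Complex.exists_mul_add_conj_mul_eq (δ b c : ℂ) {t : ℝ} (ht₀ : 0 < t) (ht₁ : t ≤ 1) :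
    ∃ z : ℂ, (1 - t) * δ + z * b + conj z * c = t * normSq z * δ := by
  rcases eq_or_ne δ 0 with rfl | hδ
  · exact ⟨0, by simp⟩
  -- With `z = r * u` the equation becomes the real quadratic `t r² - μ r - (1 - t) = 0`.
  obtain ⟨u, hu, μ, huμ⟩ := exists_norm_eq_one_mul_add_conj_mul_eq_real_mul δ b c hδ
  have hdiscrim : 0 ≤ discrim t (-μ) (-(1 - t)) := by
    rw [discrim]; nlinarith
  obtain ⟨r, hr⟩ := exists_quadratic_eq_zero ht₀.ne'
    ⟨√(discrim t (-μ) (-(1 - t))), (Real.mul_self_sqrt hdiscrim).symm⟩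
  have hnormSq : normSq (r * u) = r ^ 2 := by
    rw [normSq_mul, normSq_ofReal, normSq_eq_norm_sq, hu]; ring
  refine ⟨r * u, ?_⟩
  have hrC : (t : ℂ) * (r * r) - μ * r - (1 - t) = 0 := by
    exact_mod_cast (by linear_combination hr : t * (r * r) - μ * r - (1 - t) = 0)
  rw [hnormSq, map_mul, conj_ofReal]
  push_cast
  linear_combination (r : ℂ) * huμ - δ * hrC

namespace LinearMap

variable {E : Type*} [NormedAddCommGroup E] [InnerProductSpace ℂ E]

def numericalRangeOn (T : E →ₗ[ℂ] E) (K : Submodule ℂ E) : Set ℂ :=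
  {w | ∃ v ∈ K, ‖v‖ = 1 ∧ ⟪v, T v⟫_ℂ = w}

variable (T : E →ₗ[ℂ] E)

lemma inner_add_smul_apply_add_smul (x y : E) (z : ℂ) :
    ⟪x + z • y, T (x + z • y)⟫_ℂ =
      ⟪x, T x⟫_ℂ + z * ⟪x, T y⟫_ℂ + conj z * ⟪y, T x⟫_ℂ + Complex.normSq z * ⟪y, T y⟫_ℂ := by
  simp only [map_add, map_smul, inner_add_left, inner_add_right, inner_smul_left,
    inner_smul_right, Complex.normSq_eq_conj_mul_self]
  ring

lemma segment_subset_numericalRangeOn {x y : E} (hx : ‖x‖ = 1) (hy : ‖y‖ = 1)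
    (hxy : ⟪x, y⟫_ℂ = 0) :
    segment ℝ ⟪x, T x⟫_ℂ ⟪y, T y⟫_ℂ ⊆ numericalRangeOn T (span ℂ {x, y}) := by
  rintro _ ⟨s, t, hs, ht, hst, rfl⟩
  obtain rfl : t = 1 - s := by linarith
  have hx_mem : x ∈ span ℂ {x, y} := subset_span (by simp)
  have hy_mem : y ∈ span ℂ {x, y} := subset_span (by simp)
  obtain rfl | hs₀ := hs.eq_or_lt
  · exact ⟨y, hy_mem, hy, by simp⟩
  obtain ⟨z, hz⟩ := Complex.exists_mul_add_conj_mul_eq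
    (⟪x, T x⟫_ℂ - ⟪y, T y⟫_ℂ) ⟪x, T y⟫_ℂ ⟪y, T x⟫_ℂ hs₀ (by linarith)
  set w := x + z • y
  have hw : ‖w‖ ^ 2 = 1 + Complex.normSq z := by
    rw [sq, norm_add_sq_eq_norm_sq_add_norm_sq_of_inner_eq_zero x (z • y)
      (by rw [inner_smul_right, hxy, mul_zero]), norm_smul, hx, hy, Complex.normSq_eq_norm_sq]
    ring
  have hw₀ : (‖w‖ : ℂ) ≠ 0 := by
    have : ‖w‖ ≠ 0 := fun h => by
      rw [h] at hw
      linarith [Complex.normSq_nonneg z]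
    exact_mod_cast this
  refine ⟨(‖w‖ : ℂ)⁻¹ • w, smul_mem _ _ (add_mem hx_mem (smul_mem _ _ hy_mem)), ?_, ?_⟩
  · rw [norm_smul, norm_inv, Complex.norm_real, norm_norm, inv_mul_cancel₀]
    exact_mod_cast hw₀
  · have hwC : (‖w‖ : ℂ) ^ 2 = 1 + Complex.normSq z := by exact_mod_cast hw
    rw [map_smul, inner_smul_left, inner_smul_right, inner_add_smul_apply_add_smul, map_inv₀,
      Complex.conj_ofReal, Complex.real_smul, Complex.real_smul]
    field_simp
    rw [hwC]
    push_cast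
    linear_combination hz

lemma convexHull_image_subset_numericalRangeOn {ι : Type*} {v : ι → E} (hv : Orthonormal ℂ v)
    {s : Finset ι} (hs : s.Nonempty) :
    convexHull ℝ ((fun i => ⟪v i, T (v i)⟫_ℂ) '' s) ⊆ numericalRangeOn T (span ℂ (v '' s)) := by
  induction hs using Finset.Nonempty.cons_induction with
  | singleton a =>
    rw [Finset.coe_singleton, Set.image_singleton, convexHull_singleton, Set.singleton_subset_iff]
    exact ⟨v a, subset_span ⟨a, rfl, rfl⟩, hv.1 a, rfl⟩
  | cons a s ha hs ih =>
    rintro p hp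
    rw [Finset.coe_cons, Set.image_insert_eq,
      convexHull_insert ((Finset.coe_nonempty.mpr hs).image _), mem_convexJoin] at hp
    obtain ⟨_, rfl, _, hq, hp⟩ := hp
    obtain ⟨w, hw, hw₁, rfl⟩ := ih hq
    have hvw : ⟪v a, w⟫_ℂ = 0 := by
      suffices span ℂ (v '' s) ≤ (ℂ ∙ v a)ᗮ from
        mem_orthogonal_singleton_iff_inner_right.mp (this hw)
      rw [span_le]
      rintro _ ⟨i, hi, rfl⟩
      exact mem_orthogonal_singleton_iff_inner_right.mpr (hv.2 (ne_of_mem_of_not_mem hi ha).symm)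
    obtain ⟨u, hu, hu₁, rfl⟩ := segment_subset_numericalRangeOn T (hv.1 a) hw₁ hvw hp
    refine ⟨u, span_le.mpr ?_ hu, hu₁, rfl⟩
    rintro _ (rfl | rfl)
    · exact subset_span ⟨a, by simp, rfl⟩
    · exact span_mono (Set.image_mono (by simp)) hw

lemma exists_norm_eq_one_inner_apply_eq_zero_of_trace_eq_zero [FiniteDimensional ℂ E] [Nontrivial E]
    (hT : LinearMap.trace ℂ E T = 0) : ∃ v : E, ‖v‖ = 1 ∧ ⟪v, T v⟫_ℂ = 0 := by
  let b := stdOrthonormalBasis ℂ E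
  have hcenter : (Finset.univ.centerMass (fun _ => (1 : ℝ)) fun i => ⟪b i, T (b i)⟫_ℂ) = 0 := by
    rw [Finset.centerMass]
    simp_rw [one_smul]
    rw [← LinearMap.trace_eq_sum_inner, hT, smul_zero]
  obtain ⟨v, -, hv, hv₀⟩ := convexHull_image_subset_numericalRangeOn T b.orthonormal
    ⟨⟨0, Module.finrank_pos⟩, Finset.mem_univ _⟩
    (hcenter ▸ Finset.centerMass_mem_convexHull _ (by simp) (by simp [Module.finrank_pos])
      (fun i _ => Set.mem_image_of_mem _ (Finset.mem_coe.mpr (Finset.mem_univ i))))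
  exact ⟨v, hv, hv₀⟩

end LinearMap

namespace Matrix

variable {α β : Type*} [Fintype α] [Fintype β]

lemma trace_conjTranspose_mul_mul_of_mul_conjTranspose_eq_one [DecidableEq α] {R : Type*}
    [CommRing R] [StarRing R] {W : Matrix α β R} (hW : W * Wᴴ = 1) (M : Matrix α α R) :
    (Wᴴ * M * W).trace = M.trace := by
  rw [trace_mul_cycle, hW, one_mul]

lemma trace_fromBlocks {R : Type*} [AddCommMonoid R] (A : Matrix α α R) (B : Matrix α β R)
    (C : Matrix β α R) (D : Matrix β β R) : (fromBlocks A B C D).trace = A.trace + D.trace := by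
  simp [trace, Fintype.sum_sum_type]

lemma conjTranspose_fromBlocks_one_mul_mul [DecidableEq α] {R : Type*} [CommRing R] [StarRing R]
    (U : Matrix β β R) (C : Matrix (α ⊕ β) (α ⊕ β) R) :
    (fromBlocks (1 : Matrix α α R) 0 0 U)ᴴ * C * fromBlocks 1 0 0 U =
      fromBlocks C.toBlocks₁₁ (C.toBlocks₁₂ * U) (Uᴴ * C.toBlocks₂₁) (Uᴴ * C.toBlocks₂₂ * U) := by
  conv_lhs => rw [← fromBlocks_toBlocks C]
  simp [fromBlocks_conjTranspose, fromBlocks_multiply, Matrix.mul_assoc]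

lemma fromBlocks_one_mem_unitaryGroup [DecidableEq α] [DecidableEq β] {R : Type*} [CommRing R]
    [StarRing R] {U : Matrix β β R} (hU : U ∈ unitaryGroup β R) :
    fromBlocks (1 : Matrix α α R) 0 0 U ∈ unitaryGroup (α ⊕ β) R := by
  rw [mem_unitaryGroup_iff', star_eq_conjTranspose] at hU ⊢
  simp [fromBlocks_conjTranspose, fromBlocks_multiply, hU]

variable {ι κ : Type*} [Fintype ι] [Fintype κ]

lemma trace_reindex {R : Type*} [AddCommMonoid R] (e : ι ≃ κ) (A : Matrix ι ι R) :
    (reindex e e A).trace = A.trace :=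
  e.symm.sum_comp fun i => A i i

lemma conjTranspose_reindex_mul_mul {R : Type*} [CommRing R] [StarRing R] (e : ι ≃ κ)
    (U A : Matrix ι ι R) :
    (reindex e e U)ᴴ * reindex e e A * reindex e e U = reindex e e (Uᴴ * A * U) := by
  simp only [reindex_apply, conjTranspose_submatrix, submatrix_mul_equiv]

lemma reindex_mem_unitaryGroup [DecidableEq ι] [DecidableEq κ] {R : Type*} [CommRing R]
    [StarRing R] (e : ι ≃ κ) {U : Matrix ι ι R} (hU : U ∈ unitaryGroup ι R) :
    reindex e e U ∈ unitaryGroup κ R := by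
  rw [mem_unitaryGroup_iff', star_eq_conjTranspose] at hU ⊢
  simp [hU]

variable [DecidableEq ι]

lemma trace_toEuclideanLin (A : Matrix ι ι ℂ) :
    LinearMap.trace ℂ _ (toEuclideanLin A) = A.trace := by
  rw [toEuclideanLin_eq_toLin_orthonormal, LinearMap.trace_eq_matrix_trace ℂ
    (EuclideanSpace.basisFun ι ℂ).toBasis, LinearMap.toMatrix_toLin]

lemma conjTranspose_toMatrix_mul_mul_apply (b : OrthonormalBasis ι ℂ (EuclideanSpace ℂ ι))
    (A : Matrix ι ι ℂ) (i j : ι) :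
    (((EuclideanSpace.basisFun ι ℂ).toBasis.toMatrix b)ᴴ * A *
      (EuclideanSpace.basisFun ι ℂ).toBasis.toMatrix b) i j = ⟪b i, toEuclideanLin A (b j)⟫_ℂ := by
  rw [mul_mul_apply, EuclideanSpace.inner_eq_star_dotProduct, dotProduct_comm]
  rfl

lemma exists_mem_unitaryGroup_conj_apply_eq_zero {A : Matrix ι ι ℂ} (hA : A.trace = 0) (i₀ : ι) :
    ∃ U ∈ unitaryGroup ι ℂ, (Uᴴ * A * U) i₀ i₀ = 0 := by
  have : Nonempty ι := ⟨i₀⟩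
  obtain ⟨v, hv, hv₀⟩ := (toEuclideanLin A).exists_norm_eq_one_inner_apply_eq_zero_of_trace_eq_zero
    ((trace_toEuclideanLin A).trans hA)
  have hv_orthonormal : Orthonormal ℂ (({i₀} : Set ι).domRestrict fun _ => v) := by
    rw [orthonormal_iff_ite]
    intro i j
    rw [if_pos (Subsingleton.elim i j)]
    show ⟪v, v⟫_ℂ = 1
    simp [inner_self_eq_norm_sq_to_K, hv]
  obtain ⟨b, hb⟩ := hv_orthonormal.exists_orthonormalBasis_extension_of_card_eq
    (finrank_euclideanSpace ..)
  refine ⟨_, (EuclideanSpace.basisFun ι ℂ).toMatrix_orthonormalBasis_mem_unitary b, ?_⟩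
  rw [conjTranspose_toMatrix_mul_mul_apply, hb i₀ rfl, hv₀]

theorem exists_mem_unitaryGroup_diag_conj_eq_zero {A : Matrix ι ι ℂ} (hA : A.trace = 0) :
    ∃ U ∈ unitaryGroup ι ℂ, ∀ i, (Uᴴ * A * U) i i = 0 := by
  induction h : Fintype.card ι generalizing ι with
  | zero =>
    have := Fintype.card_eq_zero_iff.mp h
    exact ⟨1, one_mem _, isEmptyElim⟩
  | succ n ih =>
    obtain ⟨i₀⟩ : Nonempty ι := Fintype.card_pos_iff.mp (by omega)
    obtain ⟨U₁, hU₁, hB⟩ := exists_mem_unitaryGroup_conj_apply_eq_zero hA i₀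
    set B := U₁ᴴ * A * U₁
    let e := Equiv.sumCompl (· = i₀)
    set C := reindex e.symm e.symm B
    have hC₁₁ : ∀ a, C (.inl a) (.inl a) = 0 := by
      rintro ⟨_, rfl⟩
      exact hB
    have hC₂₂ : C.toBlocks₂₂.trace = 0 := by
      have hC : C.trace = 0 := by
        rw [trace_reindex,
          trace_conjTranspose_mul_mul_of_mul_conjTranspose_eq_one (mem_unitaryGroup_iff.mp hU₁), hA]
      rw [← fromBlocks_toBlocks C, trace_fromBlocks] at hC
      simpa [trace, toBlocks₁₁, hC₁₁] using hC
    obtain ⟨U₂, hU₂, hD⟩ := ih hC₂₂ (by rw [Fintype.card_subtype_compl, h]; simp)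
    refine ⟨U₁ * reindex e e (fromBlocks 1 0 0 U₂),
      mul_mem hU₁ (reindex_mem_unitaryGroup e (fromBlocks_one_mem_unitaryGroup hU₂)), fun i => ?_⟩
    have hBC : B = reindex e e C := by simp [C]
    have hconj : ∀ V : Matrix ι ι ℂ, (U₁ * V)ᴴ * A * (U₁ * V) = Vᴴ * B * V := fun V => by
      simp only [B, conjTranspose_mul, Matrix.mul_assoc]
    rw [hconj, hBC, conjTranspose_reindex_mul_mul, conjTranspose_fromBlocks_one_mul_mul,
      reindex_apply, submatrix_apply]
    rcases e.symm i with a | b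
    · exact hC₁₁ a
    · exact hD b

end Matrix

lemma delta_eq_zero_iff {n : Type*} [DecidableEq n] {M : Matrix n n ℂ} :
    delta M = 0 ↔ ∀ i, M i i = 0 := by
  rw [delta, diagonal_eq_zero, funext_iff]
  rfl

theorem stmt6 (d : ℕ) (M₁ M₂ : Matrix (Fin d) (Fin d) ℂ) :
    List.TFAE
      [ ∃ V ∈ Matrix.unitaryGroup (Fin d) ℂ, delta (Vᴴ * M₂ᴴ * M₁ * V) = 0,
        ∃ (r : ℕ) (_ : d ≤ r) (W : Matrix (Fin d) (Fin r) ℂ),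
          W * Wᴴ = 1 ∧ delta (Wᴴ * M₂ᴴ * M₁ * W) = 0,
        Matrix.trace (M₂ᴴ * M₁) = 0 ] := by
  tfae_have 1 → 2 := fun ⟨V, hV, hdiag⟩ => ⟨d, le_rfl, V, mem_unitaryGroup_iff.mp hV, hdiag⟩
  tfae_have 2 → 3 := by
    rintro ⟨r, -, W, hW, hdiag⟩
    rw [← trace_conjTranspose_mul_mul_of_mul_conjTranspose_eq_one hW, ← Matrix.mul_assoc]
    exact Finset.sum_eq_zero fun i _ => delta_eq_zero_iff.mp hdiag i
  tfae_have 3 → 1 := by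
    intro h
    obtain ⟨V, hV, hdiag⟩ := exists_mem_unitaryGroup_diag_conj_eq_zero h
    refine ⟨V, hV, delta_eq_zero_iff.mpr fun i => ?_⟩
    rw [Matrix.mul_assoc Vᴴ]
    exact hdiag i
  tfae_finish
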